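/- Let n ≥ 2, let x_0 ∈ ℝ^n with ∑_{i=1}^n x_{0,i} = 0, and let τ = 1 − 1/(n−1). For the repeated averaging chain with S(k) = ∑_{i=1}^n x_{k,i}², the expectation of S(k) under μ_n equals τ^k S(0) for every k ≥ 0. Equivalently, averaging ∑_{l=1}^n (A_{ω_{k−1}} ⋯ A_{ω_0} x_0)_l² over all C(n,2)^k finite sequences (ω_0, …, ω_{k−1}) of unordered pairs gives τ^k ∑_{i=1}^n x_{0,i}². -/

import Mathlib

open MeasureTheory Finset Filter
open scoped ENNReal NNReal

/-- The set of unordered pairs of distinct indices in `Fin n`, encoded as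
2-element subsets of `Fin n`. -/
abbrev Pairs (n : ℕ) : Type := {s : Finset (Fin n) // s.card = 2}

instance (n : ℕ) : MeasurableSpace (Pairs n) := ⊤

/-- The uniform probability measure on the set of pairs. -/
noncomputable def uniformPair (n : ℕ) : Measure (Pairs n) :=
  (Fintype.card (Pairs n) : ℝ≥0∞)⁻¹ • Measure.count

/-- `μ` is the infinite product over `ℕ` of the uniform measure on pairs:
its finite-dimensional marginals are the finite uniform product measures.
(This characterizes the infinite product measure uniquely.) -/
def IsProductLaw (n : ℕ) (μ : Measure (ℕ → Pairs n)) : Prop :=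
  ∀ K : ℕ, μ.map (fun ω (i : Fin K) => ω i) = Measure.pi fun _ : Fin K => uniformPair n

/-- The pair-averaging operation: both coordinates in `s` (a 2-element set `{i,j}`)
are replaced by `(x i + x j)/2`; the other coordinates are unchanged. -/
noncomputable def avgStep {n : ℕ} (s : Finset (Fin n)) (x : Fin n → ℝ) : Fin n → ℝ :=
  fun l => if l ∈ s then (∑ m ∈ s, x m) / 2 else x l

/-- The repeated averaging chain started at `x0`, driven by the pair sequence `ω`. -/
noncomputable def chain {n : ℕ} (x0 : Fin n → ℝ) (ω : ℕ → Pairs n) : ℕ → Fin n → ℝ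
  | 0 => x0
  | k + 1 => avgStep (ω k).1 (chain x0 ω k)

/-- `T(k) = ∑_i |x_{k,i} - 1/n|`. -/
noncomputable def Tdist {n : ℕ} (x0 : Fin n → ℝ) (ω : ℕ → Pairs n) (k : ℕ) : ℝ :=
  ∑ i, |chain x0 ω k i - 1 / n|

/-- The initial vector `(1,0,…,0)`. -/
def e1 (n : ℕ) : Fin n → ℝ := fun i => if i.val = 0 then 1 else 0

/-- The standard normal cumulative distribution function. -/
noncomputable def stdGaussianCDF (x : ℝ) : ℝ :=
  ∫ t in Set.Iic x, (2 * Real.pi) ^ (-(1:ℝ)/2) * Real.exp (-t ^ 2 / 2)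

/-- The repeated averaging process driven by a finite list of pairs (head applied first). -/
noncomputable def chainList {n : ℕ} (x0 : Fin n → ℝ) : List (Pairs n) → Fin n → ℝ
  | [] => x0
  | p :: l => chainList (avgStep p.1 x0) l

/-!
Averaging the coordinates `i, j` keeps `∑ x` and lowers `∑ x²` by `(x i - x j)² / 2`. Since
`∑_{i<j} (x i - x j)² = n ∑ x² - (∑ x)²`, summing over all `C(n,2)` pairs gives
`∑_p ∑ (A_p x)² = n(n-2)/2 · ∑ x² + (∑ x)²/2`, so on the hyperplane `∑ x = 0` one uniformly
random step multiplies `∑ x²` on average by `(n-2)/(n-1) = 1 - 1/(n-1)`, and the hyperplane is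
invariant. Iterating gives `τ^k`; under `μ` the first `k` steps are uniform on `Pairs n ^ k`.
-/

theorem sum_powersetCard_two_sum_sum {α β : Type*} [Fintype α] [DecidableEq α] [AddCommMonoid β]
    (h : α → α → β) (hdiag : ∀ a, h a a = 0) :
    ∑ s ∈ univ.powersetCard 2, ∑ a ∈ s, ∑ b ∈ s, h a b = ∑ a, ∑ b, h a b := by
  have hpair : ∀ a b, a ≠ b →
      {s ∈ (univ : Finset α).powersetCard 2 | a ∈ s ∧ b ∈ s} = {({a, b} : Finset α)} := by
    intro a b hab
    ext s
    simp only [mem_filter, mem_powersetCard_univ, mem_singleton]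
    constructor
    · rintro ⟨hs, ha, hb⟩
      exact (eq_of_subset_of_card_le (insert_subset ha (singleton_subset_iff.2 hb))
        (by rw [hs, card_pair hab])).symm
    · rintro rfl
      exact ⟨card_pair hab, by simp, by simp⟩
  calc ∑ s ∈ univ.powersetCard 2, ∑ a ∈ s, ∑ b ∈ s, h a b
      = ∑ s ∈ univ.powersetCard 2, ∑ a, ∑ b, if a ∈ s ∧ b ∈ s then h a b else 0 := by
        refine sum_congr rfl fun s _ => ?_
        simp only [ite_and, sum_ite_irrel, sum_const_zero, Fintype.sum_ite_mem]
    _ = ∑ a, ∑ b, ∑ s ∈ univ.powersetCard 2 with a ∈ s ∧ b ∈ s, h a b := by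
        rw [sum_comm]
        refine sum_congr rfl fun a _ => ?_
        rw [sum_comm]
        simp only [sum_filter]
    _ = ∑ a, ∑ b, h a b := by
        refine sum_congr rfl fun a _ => sum_congr rfl fun b _ => ?_
        rcases eq_or_ne a b with rfl | hab
        · simp [hdiag]
        · rw [hpair a b hab, sum_singleton]

theorem sum_sum_sub_sq {ι : Type*} [Fintype ι] (x : ι → ℝ) :
    ∑ i, ∑ j, (x i - x j) ^ 2 = 2 * (Fintype.card ι * ∑ i, x i ^ 2 - (∑ i, x i) ^ 2) := by
  simp only [sub_sq, sum_add_distrib, sum_sub_distrib, sum_const, card_univ, nsmul_eq_mul,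
    mul_assoc, ← mul_sum, ← sum_mul, sq (∑ i, x i)]
  ring

theorem sum_comp_avgStep {n : ℕ} (g : ℝ → ℝ) (s : Finset (Fin n)) (x : Fin n → ℝ) :
    ∑ l, g (avgStep s x l) = ∑ l, g (x l) + ∑ l ∈ s, (g ((∑ m ∈ s, x m) / 2) - g (x l)) := by
  rw [← sum_add_sum_compl s, ← sum_add_sum_compl s (fun l => g (x l)), sum_sub_distrib]
  have hin : ∀ l ∈ s, avgStep s x l = (∑ m ∈ s, x m) / 2 := fun l hl => if_pos hl
  have hout : ∀ l ∈ sᶜ, avgStep s x l = x l := fun l hl => if_neg (mem_compl.1 hl)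
  rw [sum_congr rfl fun l hl => congrArg g (hin l hl),
    sum_congr rfl fun l hl => congrArg g (hout l hl)]
  ring

section PairAveraging

variable {n : ℕ} {s : Finset (Fin n)}

theorem sum_avgStep (hs : s.card = 2) (x : Fin n → ℝ) : ∑ l, avgStep s x l = ∑ l, x l := by
  have h := sum_comp_avgStep id s x
  simp only [id, sum_sub_distrib, sum_const, hs, nsmul_eq_mul, Nat.cast_ofNat] at h
  linarith

-- For `s = {i, j}` the double sum is `2 (x i - x j)²`.
theorem sum_sq_avgStep (hs : s.card = 2) (x : Fin n → ℝ) :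
    ∑ l, avgStep s x l ^ 2 = ∑ l, x l ^ 2 - (∑ a ∈ s, ∑ b ∈ s, (x a - x b) ^ 2) / 4 := by
  obtain ⟨i, j, hij, rfl⟩ := card_eq_two.1 hs
  rw [sum_comp_avgStep (· ^ 2)]
  simp only [sum_pair hij, sub_self]
  ring

theorem sum_pairs_sum_sq_avgStep (x : Fin n → ℝ) :
    ∑ p : Pairs n, ∑ l, avgStep p.1 x l ^ 2
      = (n : ℝ) * (n - 2) / 2 * ∑ l, x l ^ 2 + (∑ l, x l) ^ 2 / 2 := by
  rw [← sum_subtype (univ.powersetCard 2) (fun _ => mem_powersetCard_univ)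
      (fun s => ∑ l, avgStep s x l ^ 2),
    sum_congr rfl fun s hs => sum_sq_avgStep (mem_powersetCard_univ.1 hs) x,
    sum_sub_distrib, sum_const, ← sum_div,
    sum_powersetCard_two_sum_sum (fun a b => (x a - x b) ^ 2) (fun a => by simp),
    sum_sum_sub_sq, card_powersetCard, card_univ, Fintype.card_fin, nsmul_eq_mul,
    Nat.cast_choose_two]
  ring

end PairAveraging

section Chain

variable {n : ℕ}

theorem chainList_append (x : Fin n → ℝ) (l₁ l₂ : List (Pairs n)) :
    chainList x (l₁ ++ l₂) = chainList (chainList x l₁) l₂ := by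
  induction l₁ generalizing x with
  | nil => rfl
  | cons p l ih => exact ih _

theorem chain_eq_chainList (x : Fin n → ℝ) (ω : ℕ → Pairs n) (k : ℕ) :
    chain x ω k = chainList x (List.ofFn fun i : Fin k => ω i) := by
  induction k with
  | zero => rfl
  | succ k ih =>
    rw [List.ofFn_succ', List.concat_eq_append, chainList_append]
    simp only [Fin.val_castSucc, Fin.val_last, ← ih]
    rfl

theorem sum_sum_sq_chainList {x : Fin n → ℝ} (hx : ∑ i, x i = 0) (k : ℕ) :
    ∑ σ : Fin k → Pairs n, ∑ l, chainList x (List.ofFn σ) l ^ 2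
      = ((n : ℝ) * (n - 2) / 2) ^ k * ∑ l, x l ^ 2 := by
  induction k generalizing x with
  | zero => simp [chainList]
  | succ k ih =>
    rw [← (Fin.consEquiv fun _ => Pairs n).sum_comp, Fintype.sum_prod_type]
    simp only [Fin.consEquiv_apply, List.ofFn_succ, Fin.cons_zero, Fin.cons_succ, chainList]
    have hp : ∀ p : Pairs n, ∑ i, avgStep p.1 x i = 0 := fun p => (sum_avgStep p.2 x).trans hx
    simp only [ih (hp _), ← mul_sum, sum_pairs_sum_sq_avgStep, hx]
    ring

end Chain

section UniformPairs

variable {n : ℕ}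

theorem card_pairs (n : ℕ) : Fintype.card (Pairs n) = n.choose 2 := by
  simp [Fintype.card_finset_len]

instance : MeasurableSingletonClass (Pairs n) := ⟨fun _ => MeasurableSpace.measurableSet_top⟩

theorem uniformPair_singleton (p : Pairs n) :
    uniformPair n {p} = (Fintype.card (Pairs n) : ℝ≥0∞)⁻¹ := by
  simp [uniformPair]

theorem isProbabilityMeasure_uniformPair (hn : 2 ≤ n) : IsProbabilityMeasure (uniformPair n) := by
  have hcard : (Fintype.card (Pairs n) : ℝ≥0∞) ≠ 0 := by
    simpa [card_pairs] using (Nat.choose_pos hn).ne'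
  constructor
  rw [uniformPair, Measure.smul_apply, Measure.count_univ, ENat.card_eq_coe_fintype_card,
    ENat.toENNReal_coe, smul_eq_mul, ENNReal.inv_mul_cancel hcard (ENNReal.natCast_ne_top _)]

theorem IsProductLaw.integral_comp_restrict (hn : 2 ≤ n) {μ : Measure (ℕ → Pairs n)}
    (hμ : IsProductLaw n μ) {k : ℕ} (f : (Fin k → Pairs n) → ℝ) :
    ∫ ω, f (fun i => ω i) ∂μ = (∑ σ, f σ) / Fintype.card (Pairs n) ^ k := by
  have := isProbabilityMeasure_uniformPair hn
  have hrestrict : Measurable fun (ω : ℕ → Pairs n) (i : Fin k) => ω i :=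
    measurable_pi_lambda _ fun i => measurable_pi_apply _
  have hsingleton (σ : Fin k → Pairs n) :
      (Measure.pi fun _ => uniformPair n).real {σ} = ((Fintype.card (Pairs n) : ℝ)⁻¹) ^ k := by
    rw [measureReal_def, ← Set.univ_pi_singleton, Measure.pi_pi]
    simp [uniformPair_singleton, ENNReal.toReal_pow, ENNReal.toReal_inv]
  rw [← integral_map hrestrict.aemeasurable (measurable_of_countable f).aestronglyMeasurable,
    hμ k, integral_fintype Integrable.of_finite, div_eq_inv_mul, mul_sum, ← inv_pow]
  simp only [hsingleton, smul_eq_mul]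

end UniformPairs

/-- **Corollary (decay of expected `L²` distance).** If `∑ x₀ᵢ = 0` and
`τ = 1 - 1/(n-1)`, then `E(S(k)) = τ^k S(0)`; equivalently, averaging
`∑ₗ (A_{ω_{k-1}} ⋯ A_{ω_0} x₀)ₗ²` over all `C(n,2)^k` finite pair sequences gives
`τ^k ∑ᵢ x₀ᵢ²`. -/
theorem expected_L2_decay (n : ℕ) (hn : 2 ≤ n)
    (μ : Measure (ℕ → Pairs n)) (hμ : IsProductLaw n μ)
    (x0 : Fin n → ℝ) (hx0 : ∑ i, x0 i = 0) (k : ℕ) :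
    (∫ ω, (∑ i, (chain x0 ω k i) ^ 2) ∂μ
        = (1 - 1 / ((n : ℝ) - 1)) ^ k * ∑ i, (x0 i) ^ 2) ∧
    (∑ σ : Fin k → Pairs n, ∑ l, (chainList x0 (List.ofFn σ) l) ^ 2)
        / ((n : ℝ) * ((n : ℝ) - 1) / 2) ^ k
      = (1 - 1 / ((n : ℝ) - 1)) ^ k * ∑ i, (x0 i) ^ 2 := by
  have hn' : (2 : ℝ) ≤ n := by exact_mod_cast hn
  have hn₁ : (n : ℝ) - 1 ≠ 0 := by linarith
  have haverage : (∑ σ : Fin k → Pairs n, ∑ l, chainList x0 (List.ofFn σ) l ^ 2)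
      / ((n : ℝ) * ((n : ℝ) - 1) / 2) ^ k = (1 - 1 / ((n : ℝ) - 1)) ^ k * ∑ i, x0 i ^ 2 := by
    rw [sum_sum_sq_chainList hx0, mul_div_right_comm, ← div_pow]
    congr 2
    field_simp
    ring
  refine ⟨?_, haverage⟩
  simp_rw [chain_eq_chainList]
  rw [hμ.integral_comp_restrict hn (fun σ => ∑ l, chainList x0 (List.ofFn σ) l ^ 2), card_pairs,
    Nat.cast_choose_two, haverage]
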